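/- There is no smooth positive function u on the punctured unit disc 𝔻* such that u is harmonic on 𝔻* and there exists C > 0 with C⁻¹/(|z|²(log|z|²)²) ≤ e^{2u(z)} ≤ C/(|z|²(log|z|²)²) for all z ∈ 𝔻*. -/

import Mathlib

open Complex

/-- The punctured open unit disc in ℂ. -/
def puncturedDisc : Set ℂ := {z : ℂ | 0 < ‖z‖ ∧ ‖z‖ < 1}

/-- `u` is harmonic on `s`: it is `C²` on `s` and its Laplacian
`∂²u/∂x² + ∂²u/∂y²` vanishes on `s`. -/
def IsHarmonicOn (u : ℂ → ℝ) (s : Set ℂ) : Prop :=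
  ContDiffOn ℝ 2 u s ∧
    ∀ z ∈ s, iteratedFDeriv ℝ 2 u z ![1, 1] + iteratedFDeriv ℝ 2 u z ![I, I] = 0

-- bridge lemma: along a line
lemma line_hasDerivAt (f : ℂ → ℝ) {z : ℂ} (v : ℂ) (t : ℝ)
    (hd : DifferentiableAt ℝ f (z + t • v)) :
    HasDerivAt (fun t' : ℝ => f (z + t' • v)) (fderiv ℝ f (z + t • v) v) t := by
  have hline : HasDerivAt (fun t' : ℝ => z + t' • v) v t := by
    simpa using ((hasDerivAt_id t).smul_const v).const_add z
  exact (hd.hasFDerivAt.comp_hasDerivAt t hline)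

lemma second_line {f : ℂ → ℝ} {s : Set ℂ} (hs : IsOpen s) (hf : ContDiffOn ℝ 2 f s)
    {z : ℂ} (hz : z ∈ s) (v : ℂ) :
    HasDerivAt (fun t : ℝ => fderiv ℝ f (z + t • v) v)
      (iteratedFDeriv ℝ 2 f z ![v, v]) 0 := by
  have h1 : ContDiffOn ℝ 1 (fderiv ℝ f) s := hf.fderiv_of_isOpen hs (by norm_num)
  have hdiff : DifferentiableAt ℝ (fderiv ℝ f) z :=
    ((h1.differentiableOn one_ne_zero) z hz).differentiableAt (hs.mem_nhds hz)
  have hline : HasDerivAt (fun t : ℝ => z + t • v) v (0:ℝ) := by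
    simpa using ((hasDerivAt_id (0:ℝ)).smul_const v).const_add z
  have happ : HasFDerivAt (fun w => fderiv ℝ f w v)
      ((ContinuousLinearMap.apply ℝ ℝ v).comp (fderiv ℝ (fderiv ℝ f) z)) z :=
    (ContinuousLinearMap.apply ℝ ℝ v).hasFDerivAt.comp z hdiff.hasFDerivAt
  rw [iteratedFDeriv_two_apply]
  have happ' : HasFDerivAt (fun w => fderiv ℝ f w v)
      ((ContinuousLinearMap.apply ℝ ℝ v).comp (fderiv ℝ (fderiv ℝ f) z)) (z + (0:ℝ) • v) := by
    simpa using happ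
  exact happ'.comp_hasDerivAt 0 hline

-- second derivative test at an interior local min
lemma second_nonneg_localMin {f : ℂ → ℝ} {s : Set ℂ} (hs : IsOpen s)
    (hf : ContDiffOn ℝ 2 f s) {z : ℂ} (hz : z ∈ s) (hmin : IsLocalMin f z) (v : ℂ) :
    0 ≤ iteratedFDeriv ℝ 2 f z ![v, v] := by
  by_contra hQ
  push_neg at hQ
  set Q := iteratedFDeriv ℝ 2 f z ![v, v] with hQdef
  have hφ : HasDerivAt (fun t : ℝ => fderiv ℝ f (z + t • v) v) Q 0 :=
    second_line hs hf hz v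
  have hφ0 : fderiv ℝ f (z + (0:ℝ) • v) v = 0 := by
    simp [hmin.fderiv_eq_zero]
  -- slope of φ tends to Q < 0, so φ t < 0 for small t > 0
  set φ : ℝ → ℝ := fun t => fderiv ℝ f (z + t • v) v with hφdef
  have hslope : Filter.Tendsto (slope φ 0) (nhdsWithin 0 {(0:ℝ)}ᶜ) (nhds Q) :=
    hasDerivAt_iff_tendsto_slope.1 hφ
  have hneg : ∀ᶠ t in nhdsWithin (0:ℝ) (Set.Ioi 0), φ t < 0 := by
    have h1 : ∀ᶠ t in nhdsWithin (0:ℝ) {(0:ℝ)}ᶜ, slope φ 0 t < 0 :=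
      hslope.eventually_lt_const hQ
    have h2 : ∀ᶠ t in nhdsWithin (0:ℝ) (Set.Ioi 0), slope φ 0 t < 0 :=
      h1.filter_mono (nhdsWithin_mono 0 (fun t ht => ne_of_gt ht))
    filter_upwards [h2, self_mem_nhdsWithin] with t ht ht0
    have hφzero : φ 0 = 0 := by simp only [hφdef]; simpa using hφ0
    have hsl : slope φ 0 t = φ t / t := by
      rw [slope_def_field, hφzero]; simp
    rw [hsl] at ht
    have hmul := mul_neg_of_neg_of_pos ht (ht0 : (0:ℝ) < t)
    calc φ t = φ t / t * t := (div_mul_cancel₀ _ (ne_of_gt (ht0 : (0:ℝ) < t))).symm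
    _ < 0 := hmul
  -- membership and min conditions near 0
  have hmem : ∀ᶠ t in nhds (0:ℝ), z + t • v ∈ s ∧ f z ≤ f (z + t • v) := by
    have hc : Filter.Tendsto (fun t : ℝ => z + t • v) (nhds 0) (nhds z) := by
      have : Continuous (fun t : ℝ => z + t • v) := by continuity
      have h0 : (fun t : ℝ => z + t • v) 0 = z := by simp
      simpa [h0] using this.tendsto 0
    have h1 := hc.eventually (hs.mem_nhds hz)
    have h2 := hc.eventually hmin
    filter_upwards [h1, h2] with t h1 h2 using ⟨h1, h2⟩
  rcases Metric.eventually_nhds_iff.1 hmem with ⟨δ₂, hδ₂, hmem'⟩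
  rcases (mem_nhdsGT_iff_exists_Ioo_subset).1 hneg with ⟨δ₁, hδ₁, hneg'⟩
  set t₀ : ℝ := min δ₁ δ₂ / 2 with ht₀def
  have hδ₁0 : (0:ℝ) < δ₁ := hδ₁
  have ht₀pos : 0 < t₀ := by positivity
  have ht₀δ₁ : t₀ < δ₁ := by
    have : min δ₁ δ₂ ≤ δ₁ := min_le_left _ _
    nlinarith
  have ht₀δ₂ : t₀ < δ₂ := by
    have : min δ₁ δ₂ ≤ δ₂ := min_le_right _ _
    nlinarith
  have hdiffat : ∀ t ∈ Set.Icc (0:ℝ) t₀, DifferentiableAt ℝ f (z + t • v) := by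
    intro t ht
    have hts : z + t • v ∈ s := by
      refine (hmem' (y := t) ?_).1
      rw [Real.dist_eq, sub_zero, _root_.abs_of_nonneg ht.1]
      exact lt_of_le_of_lt ht.2 ht₀δ₂
    exact ((hf.differentiableOn (by norm_num)) _ hts).differentiableAt (hs.mem_nhds hts)
  set g : ℝ → ℝ := fun t => f (z + t • v) with hgdef
  have hgderiv : ∀ t ∈ Set.Icc (0:ℝ) t₀, HasDerivAt g (φ t) t := fun t ht =>
    line_hasDerivAt f v t (hdiffat t ht)
  have hgc : ContinuousOn g (Set.Icc 0 t₀) := fun t ht =>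
    ((hgderiv t ht).continuousAt).continuousWithinAt
  have hgd : DifferentiableOn ℝ g (Set.Ioo 0 t₀) := fun t ht =>
    ((hgderiv t ⟨le_of_lt ht.1, le_of_lt ht.2⟩).differentiableAt).differentiableWithinAt
  obtain ⟨c, hc, hceq⟩ := exists_deriv_eq_slope g ht₀pos hgc hgd
  have hgc' : deriv g c = φ c := ((hgderiv c ⟨le_of_lt hc.1, le_of_lt hc.2⟩)).deriv
  have hφcneg : φ c < 0 := hneg' ⟨hc.1, lt_trans hc.2 ht₀δ₁⟩
  have hge : f z ≤ g t₀ := by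
    refine (hmem' (y := t₀) ?_).2
    rw [Real.dist_eq, sub_zero, _root_.abs_of_pos ht₀pos]
    exact ht₀δ₂
  have hg0 : g 0 = f z := by simp [hgdef]
  have hslope_nonneg : 0 ≤ (g t₀ - g 0) / (t₀ - 0) := by
    apply div_nonneg
    · rw [hg0]; linarith
    · linarith
  rw [hceq, hgc'] at *
  linarith [hslope_nonneg, hφcneg]

-- Laplacian notation
noncomputable def Lap (f : ℂ → ℝ) (z : ℂ) : ℝ :=
  iteratedFDeriv ℝ 2 f z ![1, 1] + iteratedFDeriv ℝ 2 f z ![I, I]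

lemma lap_add {f g : ℂ → ℝ} {s : Set ℂ} (hs : IsOpen s) (hf : ContDiffOn ℝ 2 f s)
    (hg : ContDiffOn ℝ 2 g s) {z : ℂ} (hz : z ∈ s) :
    Lap (fun w => f w + g w) z = Lap f z + Lap g z := by
  have key : ∀ m : Fin 2 → ℂ, iteratedFDeriv ℝ 2 (fun w => f w + g w) z m =
      iteratedFDeriv ℝ 2 f z m + iteratedFDeriv ℝ 2 g z m := by
    intro m
    rw [← iteratedFDerivWithin_of_isOpen (f := fun w => f w + g w) 2 hs hz,
      iteratedFDerivWithin_add_apply' (hf z hz) (hg z hz) hs.uniqueDiffOn hz]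
    simp [iteratedFDerivWithin_of_isOpen 2 hs hz]
  simp only [Lap, key]
  ring

-- the quadratic w.re^2 + w.im^2
lemma hasFDerivAt_q (w : ℂ) :
    HasFDerivAt (fun w : ℂ => w.re ^ 2 + w.im ^ 2)
      ((2 * w.re) • (Complex.reCLM : ℂ →L[ℝ] ℝ) + (2 * w.im) • (Complex.imCLM : ℂ →L[ℝ] ℝ))
      w := by
  have h1 : HasFDerivAt (fun w : ℂ => w.re) (Complex.reCLM : ℂ →L[ℝ] ℝ) w :=
    Complex.reCLM.hasFDerivAt
  have h2 : HasFDerivAt (fun w : ℂ => w.im) (Complex.imCLM : ℂ →L[ℝ] ℝ) w :=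
    Complex.imCLM.hasFDerivAt
  have := ((h1.mul h1).add (h2.mul h2))
  have hfun : (fun w : ℂ => w.re ^ 2 + w.im ^ 2) =
      ((fun w : ℂ => w.re) * fun w => w.re) + (fun w : ℂ => w.im) * fun w => w.im := by
    funext w; simp only [Pi.add_apply, Pi.mul_apply]; ring
  rw [hfun]
  exact this.congr_fderiv (by rw [two_mul, two_mul, add_smul, add_smul])

lemma lap_dir_eq {f : ℂ → ℝ} {s : Set ℂ} (hs : IsOpen s) (hf : ContDiffOn ℝ 2 f s)
    {z : ℂ} (hz : z ∈ s) (v : ℂ) (e : ℝ → ℝ) (q : ℝ) (he : HasDerivAt e q 0)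
    (heq : ∀ᶠ t in nhds (0:ℝ), fderiv ℝ f (z + t • v) v = e t) :
    iteratedFDeriv ℝ 2 f z ![v, v] = q := by
  have h2 := second_line hs hf hz v
  have heq' : (fun t : ℝ => fderiv ℝ f (z + t • v) v) =ᶠ[nhds (0:ℝ)] e := heq
  exact (heq'.hasDerivAt_iff.1 h2).unique he

lemma contDiff_q : ContDiff ℝ 2 (fun w : ℂ => w.re ^ 2 + w.im ^ 2) := by
  have h1 : ContDiff ℝ 2 (fun w : ℂ => w.re) := Complex.reCLM.contDiff
  have h2 : ContDiff ℝ 2 (fun w : ℂ => w.im) := Complex.imCLM.contDiff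
  exact (h1.pow 2).add (h2.pow 2)

lemma re_line_one (z : ℂ) (t : ℝ) : (z + t • (1:ℂ)).re = z.re + t := by
  simp [Complex.add_re, Complex.real_smul]
lemma im_line_one (z : ℂ) (t : ℝ) : (z + t • (1:ℂ)).im = z.im := by
  simp [Complex.add_im, Complex.real_smul]
lemma re_line_I (z : ℂ) (t : ℝ) : (z + t • I).re = z.re := by
  simp [Complex.add_re, Complex.real_smul]
lemma im_line_I (z : ℂ) (t : ℝ) : (z + t • I).im = z.im + t := by
  simp [Complex.add_im, Complex.real_smul]

lemma lap_quadratic (a : ℝ) (z : ℂ) :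
    Lap (fun w : ℂ => a * (w.re ^ 2 + w.im ^ 2)) z = 4 * a := by
  have hC : ContDiffOn ℝ 2 (fun w : ℂ => a * (w.re ^ 2 + w.im ^ 2)) Set.univ :=
    (contDiff_const.mul contDiff_q).contDiffOn
  have hfd : ∀ w : ℂ, fderiv ℝ (fun w : ℂ => a * (w.re ^ 2 + w.im ^ 2)) w =
      a • ((2 * w.re) • (Complex.reCLM : ℂ →L[ℝ] ℝ) + (2 * w.im) • (Complex.imCLM : ℂ →L[ℝ] ℝ)) :=
    fun w => ((hasFDerivAt_q w).const_mul a).fderiv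
  have h1 : iteratedFDeriv ℝ 2 (fun w : ℂ => a * (w.re ^ 2 + w.im ^ 2)) z ![1, 1] = 2 * a := by
    rw [show (2:ℝ) * a = a * 2 by ring]
    refine lap_dir_eq isOpen_univ hC (Set.mem_univ z) 1
      (fun t => a * (2 * (z.re + t))) (a * 2) ?_ ?_
    · simpa using (((hasDerivAt_id (0:ℝ)).const_add z.re).const_mul 2).const_mul a
    · filter_upwards with t
      rw [hfd]
      simp [re_line_one]
  have h2 : iteratedFDeriv ℝ 2 (fun w : ℂ => a * (w.re ^ 2 + w.im ^ 2)) z ![I, I] = 2 * a := by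
    rw [show (2:ℝ) * a = a * 2 by ring]
    refine lap_dir_eq isOpen_univ hC (Set.mem_univ z) I
      (fun t => a * (2 * (z.im + t))) (a * 2) ?_ ?_
    · simpa using (((hasDerivAt_id (0:ℝ)).const_add z.im).const_mul 2).const_mul a
    · filter_upwards with t
      rw [hfd]
      simp [im_line_I]
  rw [Lap, h1, h2]
  ring

lemma q_pos {w : ℂ} (hw : w ≠ 0) : 0 < w.re ^ 2 + w.im ^ 2 := by
  rcases Complex.ext_iff.not.1 hw with h
  by_contra hc
  push_neg at hc
  have h1 : w.re ^ 2 ≤ 0 := by nlinarith [sq_nonneg w.re, sq_nonneg w.im]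
  have h2 : w.im ^ 2 ≤ 0 := by nlinarith [sq_nonneg w.re, sq_nonneg w.im]
  have : w.re = 0 := by nlinarith [sq_nonneg w.re]
  have : w.im = 0 := by nlinarith [sq_nonneg w.im]
  exact hw (Complex.ext ‹w.re = 0› ‹w.im = 0›)

lemma contDiffOn_logq (c d : ℝ) :
    ContDiffOn ℝ 2 (fun w : ℂ => c * Real.log (w.re ^ 2 + w.im ^ 2) + d) {(0:ℂ)}ᶜ := by
  intro w hw
  have hw' : w ≠ 0 := hw
  have hne : w.re ^ 2 + w.im ^ 2 ≠ 0 := ne_of_gt (q_pos hw')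
  have h1 : ContDiffAt ℝ 2 (fun w : ℂ => Real.log (w.re ^ 2 + w.im ^ 2)) w :=
    by exact ((Real.contDiffAt_log (n := 2)).mpr hne).comp w contDiff_q.contDiffAt
  exact ((contDiffAt_const.mul h1).add contDiffAt_const).contDiffWithinAt

lemma fderiv_logq {c d : ℝ} {w : ℂ} (hw : w ≠ 0) :
    fderiv ℝ (fun w : ℂ => c * Real.log (w.re ^ 2 + w.im ^ 2) + d) w =
      c • ((w.re ^ 2 + w.im ^ 2)⁻¹ •
        ((2 * w.re) • (Complex.reCLM : ℂ →L[ℝ] ℝ) + (2 * w.im) • (Complex.imCLM : ℂ →L[ℝ] ℝ))) := by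
  have hne : w.re ^ 2 + w.im ^ 2 ≠ 0 := ne_of_gt (q_pos hw)
  exact ((((hasFDerivAt_q w).log hne).const_mul c).add_const d).fderiv

lemma lap_logq (c d : ℝ) {z : ℂ} (hz : z ≠ 0) :
    Lap (fun w : ℂ => c * Real.log (w.re ^ 2 + w.im ^ 2) + d) z = 0 := by
  have hsopen : IsOpen ({(0:ℂ)}ᶜ : Set ℂ) := isOpen_compl_singleton
  have hzmem : z ∈ ({(0:ℂ)}ᶜ : Set ℂ) := hz
  have hQ : (0:ℝ) < z.re ^ 2 + z.im ^ 2 := q_pos hz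
  have hQne : z.re ^ 2 + z.im ^ 2 ≠ 0 := ne_of_gt hQ
  -- eventually nonzero along lines
  have hev : ∀ v : ℂ, ∀ᶠ t in nhds (0:ℝ), z + t • v ≠ 0 := by
    intro v
    have hcont : Continuous (fun t : ℝ => z + t • v) := by continuity
    have hc : Filter.Tendsto (fun t : ℝ => z + t • v) (nhds 0) (nhds z) := by
      have h0 : (fun t : ℝ => z + t • v) 0 = z := by simp
      simpa [h0] using hcont.tendsto 0
    exact hc.eventually (isOpen_compl_singleton.eventually_mem hz)
  have h1 : iteratedFDeriv ℝ 2 (fun w : ℂ => c * Real.log (w.re ^ 2 + w.im ^ 2) + d) z ![1, 1] =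
      c * ((2 * (z.re ^ 2 + z.im ^ 2) - 2 * z.re * (2 * z.re)) / (z.re ^ 2 + z.im ^ 2) ^ 2) := by
    refine lap_dir_eq hsopen (contDiffOn_logq c d) hzmem 1
      (fun t => c * (2 * (z.re + t) / ((z.re + t) ^ 2 + z.im ^ 2))) _ ?_ ?_
    · have hnum : HasDerivAt (fun t : ℝ => 2 * (z.re + t)) 2 0 := by
        simpa using ((hasDerivAt_id (0:ℝ)).const_add z.re).const_mul 2
      have hden : HasDerivAt (fun t : ℝ => (z.re + t) ^ 2 + z.im ^ 2) (2 * z.re) 0 := by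
        simpa using (((hasDerivAt_id (0:ℝ)).const_add z.re).pow 2).add_const (z.im ^ 2)
      have hdenne : ((z.re + (0:ℝ)) ^ 2 + z.im ^ 2) ≠ 0 := by simpa using hQne
      have := (hnum.div hden hdenne).const_mul c
      simpa using this
    · filter_upwards [hev 1] with t ht
      rw [fderiv_logq ht]
      simp [re_line_one, im_line_one]
      exact Or.inl (by rw [inv_mul_eq_div])
  have h2 : iteratedFDeriv ℝ 2 (fun w : ℂ => c * Real.log (w.re ^ 2 + w.im ^ 2) + d) z ![I, I] =
      c * ((2 * (z.re ^ 2 + z.im ^ 2) - 2 * z.im * (2 * z.im)) / (z.re ^ 2 + z.im ^ 2) ^ 2) := by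
    refine lap_dir_eq hsopen (contDiffOn_logq c d) hzmem I
      (fun t => c * (2 * (z.im + t) / (z.re ^ 2 + (z.im + t) ^ 2))) _ ?_ ?_
    · have hnum : HasDerivAt (fun t : ℝ => 2 * (z.im + t)) 2 0 := by
        simpa using ((hasDerivAt_id (0:ℝ)).const_add z.im).const_mul 2
      have hden : HasDerivAt (fun t : ℝ => z.re ^ 2 + (z.im + t) ^ 2) (2 * z.im) 0 := by
        have := (((hasDerivAt_id (0:ℝ)).const_add z.im).pow 2).const_add (z.re ^ 2)
        simpa using this
      have hdenne : (z.re ^ 2 + (z.im + (0:ℝ)) ^ 2) ≠ 0 := by simpa using hQne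
      have := (hnum.div hden hdenne).const_mul c
      simpa using this
    · filter_upwards [hev I] with t ht
      rw [fderiv_logq ht]
      simp [re_line_I, im_line_I]
      exact Or.inl (by rw [inv_mul_eq_div])
  rw [Lap, h1, h2]
  field_simp
  ring

lemma sq_abs_eq (w : ℂ) : w.re ^ 2 + w.im ^ 2 = ‖w‖ ^ 2 := by
  rw [Complex.sq_norm, Complex.normSq_apply]; ring

lemma min_annulus {f : ℂ → ℝ} {s : Set ℂ} (hs : IsOpen s) (hf : ContDiffOn ℝ 2 f s)
    (hlap : ∀ w ∈ s, Lap f w = 0) {r R : ℝ} (hr : 0 < r) (hrR : r ≤ R)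
    (hsub : {w : ℂ | r ≤ ‖w‖ ∧ ‖w‖ ≤ R} ⊆ s)
    (hbd : ∀ w : ℂ, ‖w‖ = r ∨ ‖w‖ = R → 0 ≤ f w)
    {z : ℂ} (hz1 : r ≤ ‖z‖) (hz2 : ‖z‖ ≤ R) : 0 ≤ f z := by
  set K : Set ℂ := {w : ℂ | r ≤ ‖w‖ ∧ ‖w‖ ≤ R} with hKdef
  have hzK : z ∈ K := ⟨hz1, hz2⟩
  have hKclosed : IsClosed K := by
    have h1 : IsClosed {w : ℂ | r ≤ ‖w‖} :=
      isClosed_le continuous_const continuous_norm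
    have h2 : IsClosed {w : ℂ | ‖w‖ ≤ R} :=
      isClosed_le continuous_norm continuous_const
    exact h1.inter h2
  have hKb : Bornology.IsBounded K := by
    apply Metric.isBounded_closedBall (x := (0:ℂ)) (r := R) |>.subset
    intro w hw
    simpa [Metric.mem_closedBall, Complex.dist_eq] using hw.2
  have hKcompact : IsCompact K := Metric.isCompact_of_isClosed_isBounded hKclosed hKb
  have key : ∀ ε : ℝ, 0 < ε → -ε * R ^ 2 ≤ f z := by
    intro ε hε
    set g : ℂ → ℝ := fun w => f w + (-ε) * (w.re ^ 2 + w.im ^ 2) with hgdef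
    have hgC : ContDiffOn ℝ 2 g s :=
      hf.add ((contDiff_const.mul contDiff_q).contDiffOn)
    have hgcont : ContinuousOn g K :=
      (hgC.continuousOn).mono hsub
    obtain ⟨z₁, hz₁K, hz₁min⟩ := hKcompact.exists_isMinOn ⟨z, hzK⟩ hgcont
    have hlapg : Lap g z₁ = -(4 * ε) := by
      rw [hgdef, lap_add hs hf ((contDiff_const.mul contDiff_q).contDiffOn) (hsub hz₁K),
        hlap z₁ (hsub hz₁K), lap_quadratic (-ε) z₁]
      ring
    have hbdy : ‖z₁‖ = r ∨ ‖z₁‖ = R := by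
      by_contra hcon
      push_neg at hcon
      have hlt1 : r < ‖z₁‖ := lt_of_le_of_ne hz₁K.1 (Ne.symm hcon.1)
      have hlt2 : ‖z₁‖ < R := lt_of_le_of_ne hz₁K.2 hcon.2
      have hU : IsOpen {w : ℂ | r < ‖w‖ ∧ ‖w‖ < R} := by
        have h1 : IsOpen {w : ℂ | r < ‖w‖} :=
          isOpen_lt continuous_const continuous_norm
        have h2 : IsOpen {w : ℂ | ‖w‖ < R} :=
          isOpen_lt continuous_norm continuous_const
        exact h1.inter h2
      have hKnhds : K ∈ nhds z₁ :=
        Filter.mem_of_superset (hU.mem_nhds ⟨hlt1, hlt2⟩) (fun w hw => ⟨le_of_lt hw.1, le_of_lt hw.2⟩)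
      have hlocmin : IsLocalMin g z₁ := hz₁min.isLocalMin hKnhds
      have h1 := second_nonneg_localMin hs hgC (hsub hz₁K) hlocmin 1
      have h2 := second_nonneg_localMin hs hgC (hsub hz₁K) hlocmin I
      have : (0:ℝ) ≤ Lap g z₁ := by rw [Lap]; linarith
      rw [hlapg] at this
      linarith
    have hfz₁ : 0 ≤ f z₁ := hbd z₁ hbdy
    have habs₁ : ‖z₁‖ ≤ R := hz₁K.2
    have hgz₁ : -ε * R ^ 2 ≤ g z₁ := by
      rw [hgdef]
      simp only
      rw [sq_abs_eq]
      have h1 : ‖z₁‖ ^ 2 ≤ R ^ 2 := by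
        apply sq_le_sq' <;> nlinarith [norm_nonneg z₁]
      nlinarith
    have hgz : g z₁ ≤ g z := hz₁min hzK
    have : g z ≤ f z := by
      rw [hgdef]
      simp only
      nlinarith [sq_nonneg z.re, sq_nonneg z.im]
    linarith
  by_contra hneg
  push_neg at hneg
  have hR : 0 < R := lt_of_lt_of_le hr hrR
  have := key ((-f z) / (2 * (R ^ 2 + 1))) (div_pos (by linarith) (by positivity))
  have hlt : -((-f z) / (2 * (R ^ 2 + 1))) * R ^ 2 > f z := by
    rw [gt_iff_lt, neg_div, neg_neg]
    rw [div_mul_eq_mul_div, lt_div_iff₀ (by positivity)]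
    nlinarith [sq_nonneg R]
  linarith


lemma bound_extract {u : ℂ → ℝ} {C : ℝ} (hC : 0 < C)
    {w : ℂ} (hw0 : 0 < ‖w‖) (hw1 : ‖w‖ < 1)
    (h1 : C⁻¹ / (‖w‖ ^ 2 * (Real.log (‖w‖ ^ 2)) ^ 2) ≤ Real.exp (2 * u w))
    (h2 : Real.exp (2 * u w) ≤ C / (‖w‖ ^ 2 * (Real.log (‖w‖ ^ 2)) ^ 2)) :
    -(Real.log C / 2) ≤ u w + Real.log (‖w‖)
        + Real.log (2 * (-Real.log (‖w‖))) ∧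
      u w + Real.log (‖w‖) + Real.log (2 * (-Real.log (‖w‖)))
        ≤ Real.log C / 2 := by
  set a := ‖w‖ with hadef
  have hla : Real.log a < 0 := Real.log_neg hw0 hw1
  have h2l : Real.log (a ^ 2) = 2 * Real.log a := by
    rw [Real.log_pow]; push_cast; ring
  have hD : 0 < a ^ 2 * (Real.log (a ^ 2)) ^ 2 := by
    apply mul_pos (pow_pos hw0 2)
    exact pow_two_pos_of_ne_zero (by rw [h2l]; intro h; nlinarith)
  have hlogD : Real.log (a ^ 2 * (Real.log (a ^ 2)) ^ 2) =
      2 * Real.log a + 2 * Real.log (2 * (-Real.log a)) := by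
    rw [Real.log_mul (ne_of_gt (pow_pos hw0 2)) (ne_of_gt (pow_two_pos_of_ne_zero
      (by rw [h2l]; intro h; nlinarith))), Real.log_pow (Real.log (a ^ 2)) 2, h2l]
    have : Real.log (2 * Real.log a) = Real.log (2 * (-Real.log a)) := by
      rw [show 2 * (-Real.log a) = -(2 * Real.log a) by ring, Real.log_neg_eq_log]
    push_cast
    rw [this]
  constructor
  · have hl := Real.log_le_log (by positivity) h1
    rw [Real.log_exp, Real.log_div (by positivity) (ne_of_gt hD), Real.log_inv, hlogD] at hl
    linarith
  · have hl := Real.log_le_log (Real.exp_pos _) h2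
    rw [Real.log_exp, Real.log_div (ne_of_gt hC) (ne_of_gt hD), hlogD] at hl
    linarith



/-- There is no flat (i.e. with harmonic logarithm of the density) conformal metric
`e^{2u} |dz|²` on the punctured unit disc with Poincaré-type growth at the origin. -/
theorem no_flat_metric_with_poincare_growth :
    ¬ ∃ u : ℂ → ℝ, ContDiffOn ℝ (⊤ : ℕ∞) u puncturedDisc ∧ IsHarmonicOn u puncturedDisc ∧
      ∃ C : ℝ, 0 < C ∧ ∀ z ∈ puncturedDisc,
        C⁻¹ / (‖z‖ ^ 2 * (Real.log (‖z‖ ^ 2)) ^ 2) ≤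
            Real.exp (2 * u z) ∧
          Real.exp (2 * u z) ≤
            C / (‖z‖ ^ 2 * (Real.log (‖z‖ ^ 2)) ^ 2) := by
  rintro ⟨u, -, ⟨hu2, hulap⟩, C, hC, hbound⟩
  have hPD : IsOpen puncturedDisc := by
    have h1 : IsOpen {z : ℂ | 0 < ‖z‖} :=
      isOpen_lt continuous_const continuous_norm
    have h2 : IsOpen {z : ℂ | ‖z‖ < 1} :=
      isOpen_lt continuous_norm continuous_const
    exact h1.inter h2
  have hPDsub : puncturedDisc ⊆ ({(0:ℂ)}ᶜ : Set ℂ) := by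
    intro w hw
    exact norm_pos_iff.1 hw.1
  set M : ℝ := Real.log C / 2 with hM
  set L : ℝ := 4 * Real.exp (4 * M) + 2 with hLdef
  have hexpL : 0 < Real.exp (4 * M) := Real.exp_pos _
  have hL2 : (2:ℝ) < L := by rw [hLdef]; nlinarith
  have hL1 : (1:ℝ) < L := by linarith
  have hL0 : (0:ℝ) < L := by linarith
  have hLne : L - 1 ≠ 0 := by intro h; linarith [sub_eq_zero.1 h]
  set c₂ : ℝ := 1 - (Real.log (2 * L) - Real.log 2) / (L - 1) with hc₂
  set cc : ℝ := c₂ / 2 with hcc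
  set d : ℝ := M + (L * Real.log 2 - Real.log (2 * L)) / (L - 1) with hd
  set v : ℂ → ℝ := fun w => u w + (cc * Real.log (w.re ^ 2 + w.im ^ 2) + d) with hv
  have hvrw : ∀ w : ℂ, 0 < ‖w‖ →
      v w = u w + c₂ * Real.log (‖w‖) + d := by
    intro w hw
    rw [hv]
    simp only
    rw [sq_abs_eq w, Real.log_pow, hcc]
    push_cast
    ring
  have hvC : ContDiffOn ℝ 2 v puncturedDisc :=
    hu2.add ((contDiffOn_logq cc d).mono hPDsub)
  have hvlap : ∀ w ∈ puncturedDisc, Lap v w = 0 := by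
    intro w hw
    rw [hv, lap_add hPD hu2 ((contDiffOn_logq cc d).mono hPDsub) hw,
      lap_logq cc d (hPDsub hw)]
    have hu0 : Lap u w = 0 := hulap w hw
    rw [hu0]; ring
  -- the annulus
  set r : ℝ := Real.exp (-L) with hr
  set R : ℝ := Real.exp (-1) with hR
  have hr0 : 0 < r := Real.exp_pos _
  have hrR : r ≤ R := Real.exp_le_exp.2 (by linarith)
  have hR1 : R < 1 := by rw [hR, Real.exp_lt_one_iff]; norm_num
  have hsub : {w : ℂ | r ≤ ‖w‖ ∧ ‖w‖ ≤ R} ⊆ puncturedDisc := by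
    intro w hw
    exact ⟨lt_of_lt_of_le hr0 hw.1, lt_of_le_of_lt hw.2 hR1⟩
  -- boundary nonnegativity
  have hbdy : ∀ w : ℂ, ‖w‖ = r ∨ ‖w‖ = R → 0 ≤ v w := by
    intro w hcase
    have hw0 : 0 < ‖w‖ := by
      rcases hcase with h | h <;> rw [h] <;> exact Real.exp_pos _
    have hw1 : ‖w‖ < 1 := by
      rcases hcase with h | h <;> rw [h]
      · exact lt_of_le_of_lt hrR hR1
      · exact hR1
    have hwPD : w ∈ puncturedDisc := ⟨hw0, hw1⟩
    obtain ⟨hlow, -⟩ := bound_extract hC hw0 hw1 (hbound w hwPD).1 (hbound w hwPD).2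
    rw [hvrw w hw0]
    rcases hcase with h | h
    · have hla : Real.log (‖w‖) = -L := by rw [h, hr, Real.log_exp]
      rw [hla] at hlow ⊢
      have h2L : 2 * (- - L) = 2 * L := by ring
      rw [h2L] at hlow
      have hid : c₂ * (-L) + d = M - L + Real.log (2 * L) := by
        rw [hc₂, hd]; field_simp; ring
      linarith
    · have hla : Real.log (‖w‖) = -1 := by rw [h, hR, Real.log_exp]
      rw [hla] at hlow ⊢
      have h2L : 2 * (-(-1):ℝ) = 2 := by ring
      rw [h2L] at hlow
      have hid : c₂ * (-1) + d = M - 1 + Real.log 2 := by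
        rw [hc₂, hd]; field_simp; ring
      linarith
  -- the midpoint
  set x₀ : ℝ := Real.exp (-((L + 1) / 2)) with hx₀
  set z₀ : ℂ := (x₀ : ℂ) with hz₀
  have habs₀ : ‖z₀‖ = x₀ := by
    rw [hz₀, Complex.norm_real, Real.norm_eq_abs, abs_of_pos (Real.exp_pos _)]
  have hz₀1 : r ≤ ‖z₀‖ := by
    rw [habs₀, hx₀, hr]; exact Real.exp_le_exp.2 (by linarith)
  have hz₀2 : ‖z₀‖ ≤ R := by
    rw [habs₀, hx₀, hR]; exact Real.exp_le_exp.2 (by linarith)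
  have hmin := min_annulus hPD hvC hvlap hr0 hrR hsub hbdy hz₀1 hz₀2
  -- upper bound at z₀
  have h₀0 : 0 < ‖z₀‖ := lt_of_lt_of_le hr0 hz₀1
  have h₀1 : ‖z₀‖ < 1 := lt_of_le_of_lt hz₀2 hR1
  have h₀PD : z₀ ∈ puncturedDisc := ⟨h₀0, h₀1⟩
  obtain ⟨-, hup⟩ := bound_extract hC h₀0 h₀1 (hbound z₀ h₀PD).1 (hbound z₀ h₀PD).2
  have hla₀ : Real.log (‖z₀‖) = -((L + 1) / 2) := by
    rw [habs₀, hx₀, Real.log_exp]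
  rw [hla₀] at hup
  have h2L₀ : 2 * (-(-((L + 1) / 2))) = L + 1 := by ring
  rw [h2L₀] at hup
  have hvz₀ := hvrw z₀ h₀0
  rw [hla₀] at hvz₀
  have hid : c₂ * (-((L + 1) / 2)) + d =
      M - (L + 1) / 2 + (Real.log (2 * L) + Real.log 2) / 2 := by
    rw [hc₂, hd]; field_simp; ring
  -- final arithmetic contradiction
  have hlog2L : Real.log (2 * L) = Real.log 2 + Real.log L :=
    Real.log_mul two_ne_zero (ne_of_gt hL0)
  have hlogLbig : 2 * Real.log 2 + 4 * M < Real.log L := by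
    have h4 : Real.log (4 * Real.exp (4 * M)) < Real.log L :=
      Real.log_lt_log (by positivity) (by rw [hLdef]; linarith)
    rw [Real.log_mul (by norm_num) (ne_of_gt hexpL), Real.log_exp,
      show (4:ℝ) = 2 ^ 2 by norm_num, Real.log_pow] at h4
    push_cast at h4
    linarith
  have hlogL1 : Real.log L ≤ Real.log (L + 1) :=
    Real.log_le_log hL0 (by linarith)
  -- combine: 0 ≤ v z₀ ≤ 2M + (log(2L)+log2)/2 - log(L+1) < 0
  rw [← hM] at hup
  have hvub : v z₀ ≤ 2 * M + (Real.log (2 * L) + Real.log 2) / 2 - Real.log (L + 1) := by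
    rw [hvz₀]
    linarith [hid, hup]
  have h0B : (0:ℝ) ≤ 2 * M + (Real.log (2 * L) + Real.log 2) / 2 - Real.log (L + 1) :=
    le_trans hmin hvub
  have hfinal : Real.log (L + 1) ≤ 2 * M + (Real.log (2 * L) + Real.log 2) / 2 := by
    linarith [h0B]
  rw [hlog2L] at hfinal
  linarith
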